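/- Define T : L¹[0,1] → L¹[0,1] by (Tf)(t) = 2f(2t) for t ∈ [0,1/2] and (Tf)(t) = 0 for t ∈ (1/2,1]. Let C := {f ∈ L¹[0,1] : f ≥ 0 a.e. and ∫₀¹ f = 1}. Then: (i) T is a linear isometry of L¹[0,1]; (ii) T maps C into C; (iii) T has no fixed point in C. Consequently, the norm-closed convex bounded set C fails the fixed point property for affine nonexpansive mappings. -/

import Mathlib

/-!
The doubling map compresses `[0,1]` onto `[0,1/2]` with Jacobian factor `2`, so it is linear and
preserves integrals and absolute integrals. A fixed point `f` would satisfy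
`∫_{[0,2⁻ⁿ]} f = ∫_{[0,1]} f` for every `n`, while the left side tends to the integral over
`⋂ₙ [0,2⁻ⁿ] = {0}`, which is `0`; so every fixed point has integral `0` and none lies in `C`.
-/

open MeasureTheory Filter Topology

/-- Lebesgue measure on `[0,1]`. -/
noncomputable def μ01 : Measure ℝ := volume.restrict (Set.Icc 0 1)

instance : IsFiniteMeasure μ01 := by
  constructor
  simp [μ01, Real.volume_Icc]

/-- `C = {f ∈ L¹[0,1] : f ≥ 0 a.e., ∫ f = 1}`. -/
noncomputable def posProbC : Set (Lp ℝ 1 μ01) :=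
  {f | (∀ᵐ t ∂μ01, 0 ≤ f t) ∧ ∫ t, f t ∂μ01 = 1}

open Set

noncomputable def doubling (g : ℝ → ℝ) (t : ℝ) : ℝ :=
  if t ≤ 1 / 2 then 2 * g (2 * t) else 0

lemma doubling_add (f g : ℝ → ℝ) : doubling (f + g) = doubling f + doubling g := by
  ext t
  simp only [doubling, Pi.add_apply]
  split_ifs <;> ring

lemma doubling_smul (c : ℝ) (f : ℝ → ℝ) : doubling (c • f) = c • doubling f := by
  ext t
  simp only [doubling, Pi.smul_apply, smul_eq_mul]
  split_ifs <;> ring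

lemma abs_doubling (f : ℝ → ℝ) (t : ℝ) : |doubling f t| = doubling (fun s ↦ |f s|) t := by
  simp only [doubling]
  split_ifs <;> simp [abs_mul]

lemma ae_two_mul_of_ae {p : ℝ → Prop} (h : ∀ᵐ t ∂μ01, p t) :
    ∀ᵐ t ∂μ01, t ≤ 1 / 2 → p (2 * t) := by
  rw [μ01, ae_restrict_iff' measurableSet_Icc, ae_iff] at h ⊢
  -- `t ↦ 2 * t` only rescales Lebesgue measure, so it pulls null sets back to null sets.
  have hnull :
      volume ((fun t : ℝ ↦ 2 * t) ⁻¹' {s | ¬(s ∈ Icc (0 : ℝ) 1 → p s)}) = 0 := by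
    rw [Real.volume_preimage_mul_left two_ne_zero, h, mul_zero]
  refine measure_mono_null (fun t ht ↦ ?_) hnull
  simp only [mem_ofPred_eq, not_forall, mem_preimage, mem_Icc] at ht ⊢
  obtain ⟨⟨h0, -⟩, hhalf, hp⟩ := ht
  exact ⟨⟨by linarith, by linarith⟩, hp⟩

lemma doubling_congr_ae {f g : ℝ → ℝ} (h : f =ᵐ[μ01] g) :
    doubling f =ᵐ[μ01] doubling g := by
  filter_upwards [ae_two_mul_of_ae h] with t ht
  simp only [doubling]
  split_ifs with h'
  · rw [ht h']
  · rfl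

lemma doubling_nonneg_ae {f : ℝ → ℝ} (h : 0 ≤ᵐ[μ01] f) : 0 ≤ᵐ[μ01] doubling f := by
  filter_upwards [ae_two_mul_of_ae (p := fun s ↦ 0 ≤ f s) h] with t ht
  simp only [doubling, Pi.zero_apply]
  split_ifs with h'
  · linarith [ht h']
  · rfl

lemma setIntegral_Icc_mul_comp_mul_left (g : ℝ → ℝ) {c b : ℝ} (hc : 0 ≤ c)
    (hb : 0 ≤ b) :
    ∫ t in Icc 0 b, c * g (c * t) = ∫ s in Icc 0 (c * b), g s := by
  rw [integral_Icc_eq_integral_Ioc, integral_Icc_eq_integral_Ioc,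
    ← intervalIntegral.integral_of_le hb, ← intervalIntegral.integral_of_le (by positivity),
    intervalIntegral.integral_const_mul, ← smul_eq_mul,
    intervalIntegral.smul_integral_comp_mul_left, mul_zero]

lemma integral_doubling (g : ℝ → ℝ) : ∫ t, doubling g t ∂μ01 = ∫ t, g t ∂μ01 := by
  have hIcc : Icc (0 : ℝ) 1 ∩ Iic (1 / 2) = Icc 0 (1 / 2) := by
    ext t
    simp only [mem_inter_iff, mem_Icc, mem_Iic]
    constructor
    · rintro ⟨⟨h0, -⟩, h⟩
      exact ⟨h0, h⟩
    · rintro ⟨h0, h⟩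
      exact ⟨⟨h0, by linarith⟩, h⟩
  calc ∫ t, doubling g t ∂μ01
      = ∫ t in Icc 0 1, (Iic (1 / 2)).indicator (fun t ↦ 2 * g (2 * t)) t := rfl
    _ = ∫ s in Icc 0 (2 * (1 / 2)), g s := by
      rw [setIntegral_indicator measurableSet_Iic, hIcc,
        setIntegral_Icc_mul_comp_mul_left g zero_le_two (by norm_num)]
    _ = ∫ t, g t ∂μ01 := by norm_num [μ01]

lemma setIntegral_Icc_half_of_ae_eq_doubling {f : ℝ → ℝ} (hf : f =ᵐ[μ01] doubling f)
    {b : ℝ} (hb0 : 0 ≤ b) (hb1 : b ≤ 1) :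
    ∫ t in Icc 0 (b / 2), f t = ∫ t in Icc 0 b, f t := by
  have hf' : f =ᵐ[volume.restrict (Icc 0 (b / 2))] doubling f :=
    ae_restrict_of_ae_restrict_of_subset (Icc_subset_Icc_right (by linarith)) hf
  have hdouble : ∫ t in Icc 0 (b / 2), f t = ∫ t in Icc 0 (b / 2), 2 * f (2 * t) := by
    refine integral_congr_ae ?_
    filter_upwards [hf', ae_restrict_mem measurableSet_Icc] with t ht hmem
    rw [ht, doubling, if_pos (by linarith [hmem.2])]
  rw [hdouble, setIntegral_Icc_mul_comp_mul_left f zero_le_two (by linarith),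
    mul_div_cancel₀ b two_ne_zero]

lemma setIntegral_Icc_pow_half_of_ae_eq_doubling {f : ℝ → ℝ} (hf : f =ᵐ[μ01] doubling f)
    (n : ℕ) : ∫ t in Icc 0 ((1 / 2 : ℝ) ^ n), f t = ∫ t, f t ∂μ01 := by
  induction n with
  | zero => simp [μ01]
  | succ n ih =>
    rw [pow_succ, mul_one_div, setIntegral_Icc_half_of_ae_eq_doubling hf (by positivity)
      (pow_le_one₀ (by norm_num) (by norm_num)), ih]

lemma tendsto_setIntegral_Icc_pow_half {f : ℝ → ℝ} (hf : IntegrableOn f (Icc 0 1)) :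
    Tendsto (fun n : ℕ ↦ ∫ t in Icc 0 ((1 / 2 : ℝ) ^ n), f t) atTop (𝓝 0) := by
  have hanti : Antitone fun n : ℕ ↦ Icc (0 : ℝ) ((1 / 2) ^ n) := fun m n hmn ↦
    Icc_subset_Icc_right (pow_le_pow_of_le_one (by norm_num) (by norm_num) hmn)
  have hinter : ⋂ n : ℕ, Icc (0 : ℝ) ((1 / 2) ^ n) ⊆ {0} := fun t ht ↦ by
    have hle : ∀ n : ℕ, t ≤ (1 / 2) ^ n := fun n ↦ (mem_iInter.1 ht n).2
    have hpow : Tendsto (fun n : ℕ ↦ (1 / 2 : ℝ) ^ n) atTop (𝓝 0) :=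
      tendsto_pow_atTop_nhds_zero_of_lt_one (by norm_num) (by norm_num)
    exact le_antisymm (ge_of_tendsto' hpow hle) (mem_iInter.1 ht 0).1
  have hlim := tendsto_setIntegral_of_antitone (fun n ↦ measurableSet_Icc) hanti
    ⟨0, by simpa using hf⟩
  rwa [setIntegral_measure_zero f (measure_mono_null hinter Real.volume_singleton)] at hlim

lemma integral_eq_zero_of_ae_eq_doubling {f : ℝ → ℝ} (hfi : Integrable f μ01)
    (hf : f =ᵐ[μ01] doubling f) : ∫ t, f t ∂μ01 = 0 :=
  tendsto_nhds_unique
    (by simpa only [setIntegral_Icc_pow_half_of_ae_eq_doubling hf] using tendsto_const_nhds)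
    (tendsto_setIntegral_Icc_pow_half hfi)

lemma map_add_of_ae_eq_doubling {T : Lp ℝ 1 μ01 → Lp ℝ 1 μ01}
    (hT : ∀ f, T f =ᵐ[μ01] doubling f) (f g : Lp ℝ 1 μ01) : T (f + g) = T f + T g := by
  refine Lp.ext ((hT _).trans ((doubling_congr_ae (Lp.coeFn_add f g)).trans ?_))
  rw [doubling_add]
  exact ((hT f).add (hT g)).symm.trans (Lp.coeFn_add _ _).symm

lemma map_smul_of_ae_eq_doubling {T : Lp ℝ 1 μ01 → Lp ℝ 1 μ01}
    (hT : ∀ f, T f =ᵐ[μ01] doubling f) (c : ℝ) (f : Lp ℝ 1 μ01) :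
    T (c • f) = c • T f := by
  refine Lp.ext ((hT _).trans ((doubling_congr_ae (Lp.coeFn_smul c f)).trans ?_))
  rw [doubling_smul]
  exact ((hT f).const_smul c).symm.trans (Lp.coeFn_smul _ _).symm

lemma norm_map_of_ae_eq_doubling {T : Lp ℝ 1 μ01 → Lp ℝ 1 μ01}
    (hT : ∀ f, T f =ᵐ[μ01] doubling f) (f : Lp ℝ 1 μ01) : ‖T f‖ = ‖f‖ := by
  simp only [L1.norm_eq_integral_norm, Real.norm_eq_abs]
  calc ∫ t, |T f t| ∂μ01 = ∫ t, doubling (fun s ↦ |f s|) t ∂μ01 := by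
        refine integral_congr_ae ?_
        filter_upwards [hT f] with t ht
        rw [ht, abs_doubling]
    _ = ∫ t, |f t| ∂μ01 := integral_doubling _

lemma mapsTo_posProbC_of_ae_eq_doubling {T : Lp ℝ 1 μ01 → Lp ℝ 1 μ01}
    (hT : ∀ f, T f =ᵐ[μ01] doubling f) : MapsTo T posProbC posProbC := by
  rintro f ⟨hpos, hint⟩
  refine ⟨?_, ?_⟩
  · filter_upwards [hT f, doubling_nonneg_ae hpos] with t ht hnonneg
    rw [ht]
    exact hnonneg
  · rw [integral_congr_ae (hT f), integral_doubling, hint]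

lemma map_ne_self_of_ae_eq_doubling {T : Lp ℝ 1 μ01 → Lp ℝ 1 μ01}
    (hT : ∀ f, T f =ᵐ[μ01] doubling f) {f : Lp ℝ 1 μ01} (hf : f ∈ posProbC) :
    T f ≠ f := by
  intro hfix
  have hf' : f =ᵐ[μ01] doubling f := by simpa only [hfix] using hT f
  have hzero := integral_eq_zero_of_ae_eq_doubling (L1.integrable_coeFn f) hf'
  exact one_ne_zero (hf.2.symm.trans hzero)

/-- If `T : L¹[0,1] → L¹[0,1]` is given by `(Tf)(t) = 2 f(2t)` on `[0,1/2]` and `0` on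
`(1/2,1]`, then `T` is a linear isometry mapping `C` into `C` without fixed points in `C`;
consequently `C` fails the fixed point property for affine nonexpansive mappings. -/
theorem doubling_map_linear_isometry_no_fixedPoint
    (T : Lp ℝ 1 μ01 → Lp ℝ 1 μ01)
    (hT : ∀ f : Lp ℝ 1 μ01, ∀ᵐ t ∂μ01,
      (T f : ℝ → ℝ) t = if t ≤ 1 / 2 then 2 * (f : ℝ → ℝ) (2 * t) else 0) :
    (∀ f g : Lp ℝ 1 μ01, T (f + g) = T f + T g) ∧
    (∀ (c : ℝ) (f : Lp ℝ 1 μ01), T (c • f) = c • T f) ∧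
    (∀ f : Lp ℝ 1 μ01, ‖T f‖ = ‖f‖) ∧
    Set.MapsTo T posProbC posProbC ∧
    (∀ f ∈ posProbC, T f ≠ f) ∧
    ∃ S : Lp ℝ 1 μ01 → Lp ℝ 1 μ01, Set.MapsTo S posProbC posProbC ∧
      (∀ x ∈ posProbC, ∀ y ∈ posProbC, ∀ l : ℝ, 0 ≤ l → l ≤ 1 →
        S (l • x + (1 - l) • y) = l • S x + (1 - l) • S y) ∧
      (∀ x ∈ posProbC, ∀ y ∈ posProbC, ‖S x - S y‖ ≤ ‖x - y‖) ∧
      (∀ x ∈ posProbC, S x ≠ x) := by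
  have hadd := map_add_of_ae_eq_doubling hT
  have hsmul := map_smul_of_ae_eq_doubling hT
  have hnorm := norm_map_of_ae_eq_doubling hT
  have hmaps := mapsTo_posProbC_of_ae_eq_doubling hT
  have hfix : ∀ f ∈ posProbC, T f ≠ f := fun _ ↦ map_ne_self_of_ae_eq_doubling hT
  refine ⟨hadd, hsmul, hnorm, hmaps, hfix, T, hmaps, ?_, ?_, hfix⟩
  · intro x _ y _ l _ _
    rw [hadd, hsmul, hsmul]
  · intro x _ y _
    have hsub : T (x - y) = T x - T y := map_sub (AddMonoidHom.mk' T hadd) x y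
    rw [← hsub, hnorm]
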